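/- Let P_X be an m_X × n matrix and P_Z an m_Z × n matrix over 𝔽₂ with P_X · P_Zᵀ = 0. Let H₀ = ker(P_X)/im(P_Zᵀ) and H₀* = ker(P_Z)/im(P_Xᵀ), where P_X, P_Z are viewed as linear maps 𝔽₂ⁿ → 𝔽₂^{m_X}, 𝔽₂ⁿ → 𝔽₂^{m_Z}. Then: (1) for all u ∈ ker(P_X), w ∈ ker(P_Z), s ∈ im(P_Zᵀ), t ∈ im(P_Xᵀ), one has (u+s)·(w+t) = u·w, so the assignment ([u],[w]) ↦ u·w is a well-defined bilinear form H₀ × H₀* → 𝔽₂; and (2) this bilinear form is a perfect pairing, i.e. its left and right kernels are trivial. -/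

import Mathlib

/-!
STATEMENT 1: For CSS parity-check matrices P_X, P_Z over 𝔽₂ with P_X·P_Zᵀ = 0,
the dot product descends to a well-defined bilinear form
H₀ × H₀* → 𝔽₂ (H₀ = ker P_X / im P_Zᵀ, H₀* = ker P_Z / im P_Xᵀ),
and this form is a perfect pairing (trivial left and right kernels).
-/

abbrev F2 := ZMod 2

/-!
`ker P` and `im Pᵀ` are orthogonal for the dot product, and over a field each is the full
orthogonal complement of the other, since a functional vanishing on `ker P` factors through `P`.
Orthogonality lets the dot product descend to `ker P_X / im P_Zᵀ × ker P_Z / im P_Xᵀ`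
(the cross term `im P_Zᵀ · im P_Xᵀ` vanishes because `P_X P_Zᵀ = 0`), and a class pairing
trivially with all of `ker P_Z` has its representatives in `(ker P_Z)^⊥ = im P_Zᵀ`, so is zero.
-/

open LinearMap Matrix

namespace Matrix

section CommRing

variable {R l m n : Type*} [CommRing R] [Fintype m] [Fintype n]

theorem dotProduct_eq_zero_of_mem_ker_of_mem_range_transpose {P : Matrix m n R} {u t : n → R}
    (hu : u ∈ ker P.mulVecLin) (ht : t ∈ range Pᵀ.mulVecLin) : u ⬝ᵥ t = 0 := by
  obtain ⟨v, rfl⟩ := ht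
  rw [mem_ker, mulVecLin_apply] at hu
  rw [mulVecLin_apply, dotProduct_mulVec, vecMul_transpose, hu, zero_dotProduct]

theorem range_transpose_mulVecLin_le_ker {P : Matrix l n R} {Q : Matrix m n R}
    (h : P * Qᵀ = 0) : range Qᵀ.mulVecLin ≤ ker P.mulVecLin := by
  rintro _ ⟨v, rfl⟩
  rw [mem_ker, mulVecLin_apply, mulVecLin_apply, mulVec_mulVec, h, zero_mulVec]

theorem add_dotProduct_add_of_mul_transpose_eq_zero [Fintype l] {P : Matrix l n R}
    {Q : Matrix m n R} (h : P * Qᵀ = 0) {u w s t : n → R} (hu : u ∈ ker P.mulVecLin)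
    (hw : w ∈ ker Q.mulVecLin)
    (hs : s ∈ range Qᵀ.mulVecLin) (ht : t ∈ range Pᵀ.mulVecLin) :
    (u + s) ⬝ᵥ (w + t) = u ⬝ᵥ w := by
  have hut : u ⬝ᵥ t = 0 := dotProduct_eq_zero_of_mem_ker_of_mem_range_transpose hu ht
  have hsw : s ⬝ᵥ w = 0 :=
    dotProduct_comm s w ▸ dotProduct_eq_zero_of_mem_ker_of_mem_range_transpose hw hs
  have hst : s ⬝ᵥ t = 0 := dotProduct_eq_zero_of_mem_ker_of_mem_range_transpose
    (range_transpose_mulVecLin_le_ker h hs) ht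
  rw [add_dotProduct, dotProduct_add, dotProduct_add, hut, hsw, hst, add_zero, add_zero, add_zero]

end CommRing

section Field

variable {K l m n : Type*} [Field K] [Fintype m] [Fintype n]

theorem mem_range_transpose_mulVecLin_iff {P : Matrix m n K} {u : n → K} :
    u ∈ range Pᵀ.mulVecLin ↔ ∀ w ∈ ker P.mulVecLin, u ⬝ᵥ w = 0 := by
  classical
  refine ⟨fun hu w hw ↦ dotProduct_comm u w ▸
    dotProduct_eq_zero_of_mem_ker_of_mem_range_transpose hw hu, fun hu ↦ ?_⟩
  have hann : dotProductEquiv K n u ∈ (ker P.mulVecLin).dualAnnihilator :=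
    (Submodule.mem_dualAnnihilator _).2 hu
  rw [← range_dualMap_eq_dualAnnihilator_ker] at hann
  obtain ⟨ψ, hψ⟩ := hann
  refine ⟨(dotProductEquiv K m).symm ψ,
    (dotProductEquiv K n).injective (LinearMap.ext fun w ↦ ?_)⟩
  calc (Pᵀ *ᵥ (dotProductEquiv K m).symm ψ) ⬝ᵥ w
      = (dotProductEquiv K m).symm ψ ⬝ᵥ (P *ᵥ w) := by
        rw [mulVec_transpose, dotProduct_mulVec]
    _ = ψ (P *ᵥ w) := by
        rw [← dotProductEquiv_apply_apply, LinearEquiv.apply_symm_apply]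
    _ = u ⬝ᵥ w := LinearMap.congr_fun hψ w

/-- The quotient `ker P / im Qᵀ` (taken inside `ker P`); for a CSS code `(P_X, P_Z)` it is the
space `H₀` of logical `Z`-classes, and with the roles swapped the space `H₀*` of `X`-classes. -/
abbrev cssHomology (P : Matrix l n K) (Q : Matrix m n K) : Type _ :=
  ker P.mulVecLin ⧸ (range Qᵀ.mulVecLin).comap (ker P.mulVecLin).subtype

noncomputable def cssPairing [Fintype l] (P : Matrix l n K) (Q : Matrix m n K) :
    cssHomology P Q →ₗ[K] cssHomology Q P →ₗ[K] K :=
  ((dotProductBilin K K).compl₁₂ (ker P.mulVecLin).subtype (ker Q.mulVecLin).subtype).liftQ₂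
    _ _
    (fun s hs ↦ LinearMap.ext fun w ↦ (dotProduct_comm (s : n → K) w).trans
      (dotProduct_eq_zero_of_mem_ker_of_mem_range_transpose w.2 hs))
    (fun _ ht ↦ LinearMap.ext fun u ↦
      dotProduct_eq_zero_of_mem_ker_of_mem_range_transpose u.2 ht)

theorem cssPairing_mk [Fintype l] (P : Matrix l n K) (Q : Matrix m n K) (u : ker P.mulVecLin)
    (w : ker Q.mulVecLin) :
    cssPairing P Q (Submodule.Quotient.mk u) (Submodule.Quotient.mk w) =
      (u : n → K) ⬝ᵥ (w : n → K) :=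
  rfl

theorem cssHomology_mk_eq_zero_of_forall_dotProduct_eq_zero {P : Matrix l n K}
    {Q : Matrix m n K} (u : ker P.mulVecLin)
    (hu : ∀ w ∈ ker Q.mulVecLin, (u : n → K) ⬝ᵥ w = 0) :
    (Submodule.Quotient.mk u : cssHomology P Q) = 0 :=
  (Submodule.Quotient.mk_eq_zero _).2 (mem_range_transpose_mulVecLin_iff.2 hu)

theorem cssPairing_separatingLeft [Fintype l] (P : Matrix l n K) (Q : Matrix m n K) :
    (cssPairing P Q).SeparatingLeft := by
  intro x hx
  obtain ⟨u, rfl⟩ := Submodule.Quotient.mk_surjective _ x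
  exact cssHomology_mk_eq_zero_of_forall_dotProduct_eq_zero u fun w hw ↦
    hx (Submodule.Quotient.mk ⟨w, hw⟩)

theorem cssPairing_separatingRight [Fintype l] (P : Matrix l n K) (Q : Matrix m n K) :
    (cssPairing P Q).SeparatingRight := by
  intro y hy
  obtain ⟨w, rfl⟩ := Submodule.Quotient.mk_surjective _ y
  exact cssHomology_mk_eq_zero_of_forall_dotProduct_eq_zero w fun u hu ↦
    dotProduct_comm (w : n → K) u ▸ hy (Submodule.Quotient.mk ⟨u, hu⟩)

end Field

end Matrix

theorem css_pairing_well_defined_and_perfect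
    (n mX mZ : ℕ)
    (PX : Matrix (Fin mX) (Fin n) F2) (PZ : Matrix (Fin mZ) (Fin n) F2)
    (hcomm : PX * PZ.transpose = 0) :
    -- (1) well-definedness of the pairing on homology classes
    (∀ u ∈ LinearMap.ker PX.mulVecLin, ∀ w ∈ LinearMap.ker PZ.mulVecLin,
      ∀ s ∈ LinearMap.range PZ.transpose.mulVecLin,
      ∀ t ∈ LinearMap.range PX.transpose.mulVecLin,
      ∑ i, (u + s) i * (w + t) i = ∑ i, u i * w i) ∧
    -- (2) the induced bilinear form on H₀ × H₀* exists and is a perfect pairing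
    ∃ B : (LinearMap.ker PX.mulVecLin ⧸
            ((LinearMap.range PZ.transpose.mulVecLin).comap
              (LinearMap.ker PX.mulVecLin).subtype :
              Submodule F2 (LinearMap.ker PX.mulVecLin))) →ₗ[F2]
          (LinearMap.ker PZ.mulVecLin ⧸
            ((LinearMap.range PX.transpose.mulVecLin).comap
              (LinearMap.ker PZ.mulVecLin).subtype :
              Submodule F2 (LinearMap.ker PZ.mulVecLin))) →ₗ[F2] F2,
      (∀ (u : LinearMap.ker PX.mulVecLin) (w : LinearMap.ker PZ.mulVecLin),
        B (Submodule.Quotient.mk u) (Submodule.Quotient.mk w) = ∑ i, (u : Fin n → F2) i * (w : Fin n → F2) i) ∧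
      (∀ x, (∀ y, B x y = 0) → x = 0) ∧
      (∀ y, (∀ x, B x y = 0) → y = 0) :=
  ⟨fun _ hu _ hw _ hs _ ht ↦ add_dotProduct_add_of_mul_transpose_eq_zero hcomm hu hw hs ht,
    cssPairing PX PZ, cssPairing_mk PX PZ, cssPairing_separatingLeft PX PZ,
    cssPairing_separatingRight PX PZ⟩
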